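/- There exists a constant C > 0 such that ∫_{0}^{τ} [ln(λ(ϑ₁, t)) − ln(λ(ϑ₂, t))]² dt ≤ C·|ϑ₁ − ϑ₂|^{2κ + 1} for all ϑ₁, ϑ₂ ∈ Θ. -/

import Mathlib

open MeasureTheory Real Set Filter

/-- The cusp signal shape: `ψ(x) = (x/δ)^κ` for `0 < x < δ`, `1` for `x ≥ δ`, `0` for `x ≤ 0`. -/
noncomputable def psi (δ κ : ℝ) (x : ℝ) : ℝ :=
  if δ ≤ x then 1 else if 0 < x then (x / δ) ^ κ else 0

/-- Theoretical intensity `λ(ϑ, t) = S ψ(t − ϑ) + λ₀`. -/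
noncomputable def lamT (S lam0 δ κ : ℝ) (ϑ t : ℝ) : ℝ :=
  S * psi δ κ (t - ϑ) + lam0

/-- Real intensity `λ*(ϑ₀, t) = (S + h) ψ(t − ϑ₀) + λ₀`. -/
noncomputable def lamR (S h lam0 δ κ : ℝ) (ϑ₀ t : ℝ) : ℝ :=
  (S + h) * psi δ κ (t - ϑ₀) + lam0

/-- The Kullback–Leibler divergence `J(ϑ)`. -/
noncomputable def JKL (S h lam0 δ κ τ ϑ₀ : ℝ) (ϑ : ℝ) : ℝ :=
  ∫ t in (min ϑ ϑ₀)..τ,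
    (lamT S lam0 δ κ ϑ t / lamR S h lam0 δ κ ϑ₀ t - 1 -
      Real.log (lamT S lam0 δ κ ϑ t / lamR S h lam0 δ κ ϑ₀ t)) *
      lamR S h lam0 δ κ ϑ₀ t


/-!
Since `λ ≥ λ₀`, `|log a - log b| ≤ |a - b| / λ₀` bounds the integrand by
`(S/λ₀)² (ψ(s + h) - ψ(s))²` with `s = t - ϑ₂`, `h = ϑ₂ - ϑ₁ > 0`. This difference vanishes for
`s < -h`, is at most `ψ(2h) ≤ (2h/δ)^κ` for `|s| ≤ h`, and by concavity of `x ↦ x^κ` is at most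
`κ h s^(κ-1) / δ^κ` for `s > h`. Integrating the squares over the whole line gives
`2h (2h/δ)^(2κ)` and `(κ h / δ^κ)² h^(2κ-1) / (1 - 2κ)`, the latter finite because `κ < 1/2`;
both are multiples of `h^(2κ+1)`.
-/

section Psi

variable {δ κ x : ℝ}

lemma psi_of_nonpos (hδ : 0 < δ) (hx : x ≤ 0) : psi δ κ x = 0 := by
  simp [psi, (hx.trans_lt hδ).not_ge, hx.not_gt]

lemma psi_of_le (hx : δ ≤ x) : psi δ κ x = 1 := if_pos hx

lemma psi_of_pos_of_lt (hx₀ : 0 < x) (hxδ : x < δ) : psi δ κ x = (x / δ) ^ κ := by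
  simp [psi, hxδ.not_ge, hx₀]

lemma psi_nonneg (hδ : 0 < δ) (x : ℝ) : 0 ≤ psi δ κ x := by
  unfold psi
  split_ifs with h₁ h₂
  exacts [zero_le_one, Real.rpow_nonneg (div_nonneg h₂.le hδ.le) κ, le_rfl]

lemma psi_le_one (hδ : 0 < δ) (hκ : 0 ≤ κ) (x : ℝ) : psi δ κ x ≤ 1 := by
  unfold psi
  split_ifs with h₁ h₂
  · rfl
  · exact Real.rpow_le_one (by positivity) ((div_le_one hδ).2 (le_of_not_ge h₁)) hκ
  · norm_num

lemma psi_le_rpow (hδ : 0 < δ) (hκ : 0 ≤ κ) (hx : 0 ≤ x) : psi δ κ x ≤ (x / δ) ^ κ := by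
  rcases hx.eq_or_lt with rfl | hx
  · rw [psi_of_nonpos hδ le_rfl]; positivity
  rcases lt_or_ge x δ with hxδ | hxδ
  · rw [psi_of_pos_of_lt hx hxδ]
  · rw [psi_of_le hxδ]
    exact Real.one_le_rpow ((one_le_div hδ).2 hxδ) hκ

lemma psi_monotone (hδ : 0 < δ) (hκ : 0 ≤ κ) : Monotone (psi δ κ) := by
  intro x y hxy
  rcases le_or_gt x 0 with hx | hx
  · rw [psi_of_nonpos hδ hx]; exact psi_nonneg hδ y
  rcases le_or_gt δ y with hy | hy
  · rw [psi_of_le hy]; exact psi_le_one hδ hκ x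
  rw [psi_of_pos_of_lt hx (hxy.trans_lt hy), psi_of_pos_of_lt (hx.trans_le hxy) hy]
  gcongr

end Psi

lemma Real.rpow_add_sub_rpow_le {x d p : ℝ} (hx : 0 < x) (hxd : 0 ≤ x + d) (hp₀ : 0 ≤ p)
    (hp₁ : p ≤ 1) : (x + d) ^ p - x ^ p ≤ p * x ^ (p - 1) * d := by
  have hbern : (1 + d / x) ^ p ≤ 1 + p * (d / x) :=
    rpow_one_add_le_one_add_mul_self (by rw [le_div_iff₀ hx]; linarith) hp₀ hp₁
  have hfactor : x + d = x * (1 + d / x) := by field_simp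
  rw [hfactor, Real.mul_rpow hx.le (by rw [← mul_nonneg_iff_of_pos_left hx, ← hfactor]; exact hxd),
    Real.rpow_sub_one hx.ne']
  calc x ^ p * (1 + d / x) ^ p - x ^ p ≤ x ^ p * (1 + p * (d / x)) - x ^ p := by gcongr
    _ = p * (x ^ p / x) * d := by field_simp; ring

lemma psi_add_sub_le {δ κ x d : ℝ} (hδ : 0 < δ) (hκ₀ : 0 ≤ κ) (hκ₁ : κ ≤ 1) (hx : 0 < x)
    (hd : 0 ≤ d) : psi δ κ (x + d) - psi δ κ x ≤ κ * x ^ (κ - 1) * d / δ ^ κ := by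
  rcases le_or_gt δ x with hxδ | hxδ
  · rw [psi_of_le hxδ, psi_of_le (by linarith), sub_self]
    positivity
  calc psi δ κ (x + d) - psi δ κ x ≤ ((x + d) ^ κ - x ^ κ) / δ ^ κ := by
        rw [psi_of_pos_of_lt hx hxδ, sub_div, ← Real.div_rpow hx.le hδ.le,
          ← Real.div_rpow (by linarith) hδ.le]
        gcongr
        exact psi_le_rpow hδ hκ₀ (by linarith)
    _ ≤ κ * x ^ (κ - 1) * d / δ ^ κ := by
        gcongr
        exact Real.rpow_add_sub_rpow_le hx (by linarith) hκ₀ hκ₁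

/-- An integrable majorant of `s ↦ (ψ(s + h) - ψ(s))²`: the crude bound `ψ(2h)²` on `[-h, h]`,
and the tangent-line bound `κ h s^(κ-1) / δ^κ` on `(h, ∞)`, whose square is integrable at
infinity because `κ < 1/2`. -/
noncomputable def cuspMajorant (δ κ h : ℝ) : ℝ → ℝ :=
  (Icc (-h) h).indicator (fun _ => (2 * h / δ) ^ (2 * κ)) +
    (Ioi h).indicator (fun s => (κ * h / δ ^ κ) ^ 2 * s ^ (2 * κ - 2))

noncomputable def cuspConst (δ κ : ℝ) : ℝ :=
  (2 ^ (2 * κ + 1) + κ ^ 2 / (1 - 2 * κ)) / δ ^ (2 * κ)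

section CuspMajorant

variable {δ κ h : ℝ}

lemma cuspConst_pos (hδ : 0 < δ) (hκ : κ < 1 / 2) : 0 < cuspConst δ κ := by
  have : 0 < 1 - 2 * κ := by linarith
  unfold cuspConst
  positivity

lemma cuspMajorant_nonneg (hδ : 0 < δ) (hh : 0 ≤ h) (s : ℝ) : 0 ≤ cuspMajorant δ κ h s := by
  unfold cuspMajorant
  refine add_nonneg (indicator_nonneg (fun _ _ => by positivity) s)
    (indicator_nonneg (fun s hs => ?_) s)
  have : 0 < s := hh.trans_lt hs
  positivity

lemma sq_psi_add_sub_le_cuspMajorant (hδ : 0 < δ) (hκ₀ : 0 ≤ κ) (hκ₁ : κ ≤ 1) (hh : 0 ≤ h)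
    (s : ℝ) : (psi δ κ (s + h) - psi δ κ s) ^ 2 ≤ cuspMajorant δ κ h s := by
  have hmono := psi_monotone hδ hκ₀
  have hdiff : 0 ≤ psi δ κ (s + h) - psi δ κ s := sub_nonneg.2 (hmono (by linarith))
  rcases lt_or_ge s (-h) with hs | hs
  · rw [psi_of_nonpos hδ (by linarith), psi_of_nonpos hδ (by linarith)]
    simpa using cuspMajorant_nonneg hδ hh s
  rcases le_or_gt s h with hs' | hs'
  · have hbound : psi δ κ (s + h) - psi δ κ s ≤ (2 * h / δ) ^ κ :=
      calc psi δ κ (s + h) - psi δ κ s ≤ psi δ κ (2 * h) := by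
            linarith [hmono (by linarith : s + h ≤ 2 * h), psi_nonneg hδ (κ := κ) s]
        _ ≤ (2 * h / δ) ^ κ := psi_le_rpow hδ hκ₀ (by linarith)
    have hval : cuspMajorant δ κ h s = (2 * h / δ) ^ (2 * κ) := by
      simp only [cuspMajorant, Pi.add_apply, indicator_of_mem (mem_Icc.2 ⟨hs, hs'⟩),
        indicator_of_notMem (notMem_Ioi.2 hs'), add_zero]
    rw [hval, show 2 * κ = κ * (2 : ℕ) by push_cast; ring, Real.rpow_mul_natCast (by positivity)]
    gcongr
  · have hs₀ : 0 < s := hh.trans_lt hs'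
    have hbound := psi_add_sub_le hδ hκ₀ hκ₁ hs₀ hh
    have hval : cuspMajorant δ κ h s = (κ * h / δ ^ κ) ^ 2 * s ^ (2 * κ - 2) := by
      simp only [cuspMajorant, Pi.add_apply, indicator_of_mem (mem_Ioi.2 hs'), zero_add,
        indicator_of_notMem (fun hs : s ∈ Icc (-h) h => hs'.not_ge hs.2)]
    calc (psi δ κ (s + h) - psi δ κ s) ^ 2 ≤ (κ * s ^ (κ - 1) * h / δ ^ κ) ^ 2 := by gcongr
      _ = cuspMajorant δ κ h s := by
        rw [hval, show 2 * κ - 2 = (κ - 1) * (2 : ℕ) by push_cast; ring,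
          Real.rpow_mul_natCast hs₀.le]
        ring

lemma integrable_indicator_Icc_const (a b c : ℝ) :
    Integrable ((Icc a b).indicator fun _ => c) :=
  (integrable_indicator_iff measurableSet_Icc).2 (integrableOn_const measure_Icc_lt_top.ne)

lemma integrable_indicator_Ioi_mul_rpow (hκ : κ < 1 / 2) (hh : 0 < h) (c : ℝ) :
    Integrable ((Ioi h).indicator fun s => c * s ^ (2 * κ - 2)) :=
  (integrable_indicator_iff measurableSet_Ioi).2
    ((integrableOn_Ioi_rpow_of_lt (by linarith) hh).const_mul c)

lemma integrable_cuspMajorant (hκ : κ < 1 / 2) (hh : 0 < h) : Integrable (cuspMajorant δ κ h) :=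
  (integrable_indicator_Icc_const _ _ _).add (integrable_indicator_Ioi_mul_rpow hκ hh _)

lemma integral_cuspMajorant (hδ : 0 < δ) (hκ : κ < 1 / 2) (hh : 0 < h) :
    ∫ s, cuspMajorant δ κ h s = cuspConst δ κ * h ^ (2 * κ + 1) := by
  have hIcc : ∫ s in Icc (-h) h, (2 * h / δ) ^ (2 * κ) = 2 * h * (2 * h / δ) ^ (2 * κ) := by
    rw [setIntegral_const, Real.volume_real_Icc_of_le (by linarith), smul_eq_mul]
    ring
  have hIoi : ∫ s in Ioi h, (κ * h / δ ^ κ) ^ 2 * s ^ (2 * κ - 2) =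
      (κ * h / δ ^ κ) ^ 2 * (h ^ (2 * κ - 1) / (1 - 2 * κ)) := by
    rw [integral_const_mul, integral_Ioi_rpow_of_lt (by linarith) hh]
    congr 1
    rw [show 2 * κ - 2 + 1 = 2 * κ - 1 by ring, neg_div, ← div_neg, neg_sub]
  simp only [cuspMajorant, Pi.add_apply]
  rw [integral_add (integrable_indicator_Icc_const _ _ _)
    (integrable_indicator_Ioi_mul_rpow hκ hh _), integral_indicator measurableSet_Icc,
    integral_indicator measurableSet_Ioi, hIcc, hIoi]
  have hδ2 : (δ ^ κ) ^ 2 = δ ^ (2 * κ) := by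
    rw [← Real.rpow_mul_natCast hδ.le]; push_cast; ring_nf
  rw [cuspConst, Real.div_rpow (by positivity) hδ.le, Real.mul_rpow zero_le_two hh.le,
    Real.rpow_add_one two_ne_zero, Real.rpow_add_one hh.ne', Real.rpow_sub_one hh.ne', div_pow,
    hδ2]
  have : 1 - 2 * κ ≠ 0 := by linarith
  field_simp

end CuspMajorant

lemma Real.abs_log_sub_log_le {a b c : ℝ} (hc : 0 < c) (ha : c ≤ a) (hb : c ≤ b) :
    |log a - log b| ≤ |a - b| / c := by
  wlog hba : b ≤ a generalizing a b
  · rw [abs_sub_comm, abs_sub_comm a]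
    exact this hb ha (le_of_not_ge hba)
  have hb₀ : 0 < b := hc.trans_le hb
  rw [abs_of_nonneg (sub_nonneg.2 (log_le_log hb₀ hba)), abs_of_nonneg (sub_nonneg.2 hba),
    ← log_div (hb₀.trans_le hba).ne' hb₀.ne']
  calc log (a / b) ≤ a / b - 1 := log_le_sub_one_of_pos (div_pos (hb₀.trans_le hba) hb₀)
    _ = (a - b) / b := by field_simp
    _ ≤ (a - b) / c := by gcongr

section Intensity

open scoped Interval

variable {S lam0 δ κ : ℝ}

lemma lam0_le_lamT (hS : 0 ≤ S) (hδ : 0 < δ) (ϑ t : ℝ) : lam0 ≤ lamT S lam0 δ κ ϑ t :=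
  le_add_of_nonneg_left (mul_nonneg hS (psi_nonneg hδ _))

lemma sq_log_lamT_sub_log_lamT_le (hS : 0 ≤ S) (hlam0 : 0 < lam0) (hδ : 0 < δ) (ϑ₁ ϑ₂ t : ℝ) :
    (log (lamT S lam0 δ κ ϑ₁ t) - log (lamT S lam0 δ κ ϑ₂ t)) ^ 2 ≤
      (S / lam0) ^ 2 * (psi δ κ (t - ϑ₁) - psi δ κ (t - ϑ₂)) ^ 2 := by
  have hlog := Real.abs_log_sub_log_le hlam0 (lam0_le_lamT (κ := κ) hS hδ ϑ₁ t)
    (lam0_le_lamT (κ := κ) hS hδ ϑ₂ t)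
  calc _ = |log (lamT S lam0 δ κ ϑ₁ t) - log (lamT S lam0 δ κ ϑ₂ t)| ^ 2 := (sq_abs _).symm
    _ ≤ (|lamT S lam0 δ κ ϑ₁ t - lamT S lam0 δ κ ϑ₂ t| / lam0) ^ 2 := by gcongr
    _ = (S / lam0) ^ 2 * (psi δ κ (t - ϑ₁) - psi δ κ (t - ϑ₂)) ^ 2 := by
      rw [div_pow, sq_abs, lamT, lamT]; ring

/-- Comparing with a translate of `cuspMajorant`, which is integrable on the whole line, makes the
bound independent of the interval of integration. -/
lemma integral_sq_log_lamT_sub_log_lamT_le (hS : 0 ≤ S) (hlam0 : 0 < lam0) (hδ : 0 < δ)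
    (hκ₀ : 0 ≤ κ) (hκ : κ < 1 / 2) {ϑ₁ ϑ₂ : ℝ} (h₁₂ : ϑ₁ < ϑ₂) (a b : ℝ) :
    ∫ t in a..b, (log (lamT S lam0 δ κ ϑ₁ t) - log (lamT S lam0 δ κ ϑ₂ t)) ^ 2 ≤
      (S / lam0) ^ 2 * cuspConst δ κ * (ϑ₂ - ϑ₁) ^ (2 * κ + 1) := by
  set f := fun t => (log (lamT S lam0 δ κ ϑ₁ t) - log (lamT S lam0 δ κ ϑ₂ t)) ^ 2
  set g := fun t => (S / lam0) ^ 2 * cuspMajorant δ κ (ϑ₂ - ϑ₁) (t - ϑ₂)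
  have hh : 0 < ϑ₂ - ϑ₁ := sub_pos.2 h₁₂
  have hg : Integrable g := ((integrable_cuspMajorant hκ hh).comp_sub_right ϑ₂).const_mul _
  have hg₀ : ∀ t, 0 ≤ g t := fun t => mul_nonneg (sq_nonneg _) (cuspMajorant_nonneg hδ hh.le _)
  have hfg : ∀ t, ‖f t‖ ≤ g t := fun t => by
    calc ‖f t‖ = f t := Real.norm_of_nonneg (sq_nonneg _)
      _ ≤ (S / lam0) ^ 2 * (psi δ κ (t - ϑ₂ + (ϑ₂ - ϑ₁)) - psi δ κ (t - ϑ₂)) ^ 2 := by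
        rw [sub_add_sub_cancel]; exact sq_log_lamT_sub_log_lamT_le hS hlam0 hδ ϑ₁ ϑ₂ t
      _ ≤ g t := mul_le_mul_of_nonneg_left
        (sq_psi_add_sub_le_cuspMajorant hδ hκ₀ (by linarith) hh.le _) (sq_nonneg _)
  calc ∫ t in a..b, f t ≤ ∫ t in Ι a b, ‖f t‖ :=
        (Real.le_norm_self _).trans intervalIntegral.norm_integral_le_integral_norm_uIoc
    _ ≤ ∫ t in Ι a b, g t :=
        integral_mono_of_nonneg (ae_of_all _ fun _ => norm_nonneg _) hg.integrableOn
          (ae_of_all _ hfg)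
    _ ≤ ∫ t, g t := setIntegral_le_integral hg (ae_of_all _ hg₀)
    _ = (S / lam0) ^ 2 * cuspConst δ κ * (ϑ₂ - ϑ₁) ^ (2 * κ + 1) := by
        rw [integral_const_mul, integral_sub_right_eq_self (cuspMajorant δ κ (ϑ₂ - ϑ₁)),
          integral_cuspMajorant hδ hκ hh, mul_assoc]

end Intensity

theorem stmt_16_general (S lam0 δ τ κ α β : ℝ)
    (hS : 0 < S) (hlam0 : 0 < lam0) (hδ : 0 < δ)
    (hκ : κ ∈ Set.Ioo (0 : ℝ) (1 / 2)) :
    ∃ C : ℝ, 0 < C ∧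
      ∀ ϑ₁ ∈ Set.Ioo (α - δ) (β + δ), ∀ ϑ₂ ∈ Set.Ioo (α - δ) (β + δ),
        (∫ t in (0 : ℝ)..τ,
            (Real.log (lamT S lam0 δ κ ϑ₁ t) - Real.log (lamT S lam0 δ κ ϑ₂ t)) ^ 2) ≤
          C * |ϑ₁ - ϑ₂| ^ (2 * κ + 1) := by
  obtain ⟨hκ₀, hκ₁⟩ := hκ
  have hC := cuspConst_pos hδ hκ₁
  refine ⟨(S / lam0) ^ 2 * cuspConst δ κ, by positivity, fun ϑ₁ _ ϑ₂ _ => ?_⟩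
  rcases lt_trichotomy ϑ₁ ϑ₂ with h₁₂ | rfl | h₂₁
  · rw [abs_sub_comm, abs_of_pos (sub_pos.2 h₁₂)]
    exact integral_sq_log_lamT_sub_log_lamT_le hS.le hlam0 hδ hκ₀.le hκ₁ h₁₂ 0 τ
  · simp only [sub_self, zero_pow two_ne_zero, intervalIntegral.integral_zero, abs_zero]
    positivity
  · simp_rw [sub_sq_comm (log (lamT S lam0 δ κ ϑ₁ _)), abs_of_pos (sub_pos.2 h₂₁)]
    exact integral_sq_log_lamT_sub_log_lamT_le hS.le hlam0 hδ hκ₀.le hκ₁ h₂₁ 0 τ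

theorem stmt_16 (S lam0 δ τ κ α β : ℝ)
    (hS : 0 < S) (hlam0 : 0 < lam0) (hδ : 0 < δ) (hτ : 0 < τ)
    (hκ : κ ∈ Set.Ioo (0 : ℝ) (1 / 2)) (hαβ : α < β)
    (hΘ : Set.Ioo (α - δ) (β + δ) ⊆ Set.Ioo 0 (τ - δ)) :
    ∃ C : ℝ, 0 < C ∧
      ∀ ϑ₁ ∈ Set.Ioo (α - δ) (β + δ), ∀ ϑ₂ ∈ Set.Ioo (α - δ) (β + δ),
        (∫ t in (0 : ℝ)..τ,
            (Real.log (lamT S lam0 δ κ ϑ₁ t) - Real.log (lamT S lam0 δ κ ϑ₂ t)) ^ 2) ≤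
          C * |ϑ₁ - ϑ₂| ^ (2 * κ + 1) :=
  stmt_16_general S lam0 δ τ κ α β hS hlam0 hδ hκ
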